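/- The operator T on the lattice of interpretations is continuous: for any ω-chain of interpretations I₀ ⊑ I₁ ⊑ ..., T(⊔ₙ Iₙ) = ⊔ₙ T(Iₙ) (pointwise union). -/
import Mathlib


/-! ## hereditary Harrop fragment -/

inductive Atm : Type
  | bot : Atm
  | at_ : ℕ → Atm

mutual
  inductive Df : Type
    | atom : Atm → Df
    | imp : Gf → Atm → Df
    | and : Df → Df → Df
  inductive Gf : Type
    | atom : Atm → Gf
    | dimp : Df → Gf → Gf
    | and : Gf → Gf → Gf
    | or : Gf → Gf → Gf
end

noncomputable instance : DecidableEq Df := Classical.decEq _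
noncomputable instance : DecidableEq Atm := Classical.decEq _

/-- A program is a finite set of definite formulae. -/
abbrev Program := Finset Df

/-- `[P]` : closure of a program under decomposing conjunctions. -/
inductive InClos (P : Program) : Df → Prop
  | mem {d} : d ∈ P → InClos P d
  | andl {d₁ d₂} : InClos P (Df.and d₁ d₂) → InClos P d₁
  | andr {d₁ d₂} : InClos P (Df.and d₁ d₂) → InClos P d₂

/-- An interpretation: a monotone map from programs to sets of atoms. -/
structure Interp where
  val : Program → Set Atm
  mono : ∀ {P Q : Program}, P ⊆ Q → val P ⊆ val Q

/-- Pointwise order on interpretations. -/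
def Interp.le (I J : Interp) : Prop := ∀ P, I.val P ⊆ J.val P

/-- Satisfaction `I, P ⊨ G`. -/
def sat (I : Interp) : Program → Gf → Prop
  | P, Gf.atom a => a ∈ I.val P
  | P, Gf.dimp d g => sat I (insert d P) g
  | P, Gf.and g₁ g₂ => sat I P g₁ ∧ sat I P g₂
  | P, Gf.or g₁ g₂ => sat I P g₁ ∨ sat I P g₂

theorem InClos.mono' {P Q : Program} (h : P ⊆ Q) : ∀ {d}, InClos P d → InClos Q d := by
  intro d hd
  induction hd with
  | mem hm => exact InClos.mem (h hm)
  | andl _ ih => exact InClos.andl ih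
  | andr _ ih => exact InClos.andr ih

theorem sat_mono (I : Interp) : ∀ (g : Gf) {P Q : Program}, P ⊆ Q → sat I P g → sat I Q g
  | Gf.atom _, _, _, h, hs => I.mono h hs
  | Gf.dimp d g, _, _, h, hs => sat_mono I g (Finset.insert_subset_insert d h) hs
  | Gf.and g₁ g₂, _, _, h, hs => ⟨sat_mono I g₁ h hs.1, sat_mono I g₂ h hs.2⟩
  | Gf.or g₁ g₂, _, _, h, hs =>
      hs.elim (fun x => Or.inl (sat_mono I g₁ h x)) (fun x => Or.inr (sat_mono I g₂ h x))

/-- The raw unfolding operator. -/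
def Traw (I : Interp) (P : Program) : Set Atm :=
  {a | InClos P (Df.atom a)} ∪
  {a | ∃ g, InClos P (Df.imp g a) ∧ sat I P g} ∪
  {a | sat I P (Gf.atom Atm.bot)}

/-- `T` maps interpretations to interpretations. -/
def T (I : Interp) : Interp := by
  refine ⟨Traw I, ?_⟩
  intro P Q h a ha
  simp only [Traw, Set.mem_union, Set.mem_setOf_eq] at ha ⊢
  rcases ha with (h1 | ⟨g, hg, hs⟩) | h3
  · exact Or.inl (Or.inl (InClos.mono' h h1))
  · exact Or.inl (Or.inr ⟨g, InClos.mono' h hg, sat_mono I _ h hs⟩)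
  · exact Or.inr (sat_mono I _ h h3)

/-- The bottom interpretation. -/
def Ibot : Interp := ⟨fun _ => ∅, fun _ => Set.Subset.refl _⟩

/-- Iterates of `T` from the bottom interpretation. -/
def Tn : ℕ → Interp
  | 0 => Ibot
  | n + 1 => T (Tn n)

/-- `T^ω I_⊥`, the least fixed point of `T`. -/
def Tomega : Interp :=
  ⟨fun P => ⋃ n, (Tn n).val P, fun h => Set.iUnion_mono fun n => (Tn n).mono h⟩

/-- The pointwise supremum of a family of interpretations. -/
def chainSup (I : ℕ → Interp) : Interp :=
  ⟨fun P => ⋃ n, (I n).val P, fun h => Set.iUnion_mono fun n => (I n).mono h⟩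

/-- Operational semantics for hHLP. -/
inductive Exec : Program → Gf → Prop
  | inn {P a} : InClos P (Df.atom a) → Exec P (Gf.atom a)
  | clause {P g a} : InClos P (Df.imp g a) → Exec P g → Exec P (Gf.atom a)
  | efq {P g} : Exec P (Gf.atom Atm.bot) → Exec P g
  | orl {P g₁ g₂} : Exec P g₁ → Exec P (Gf.or g₁ g₂)
  | orr {P g₁ g₂} : Exec P g₂ → Exec P (Gf.or g₁ g₂)
  | and {P g₁ g₂} : Exec P g₁ → Exec P g₂ → Exec P (Gf.and g₁ g₂)
  | load {P d g} : Exec (insert d P) g → Exec P (Gf.dimp d g)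

/-! ## Formulae of IPL and natural deduction NJ -/

inductive Fml : Type
  | atom : ℕ → Fml
  | bot : Fml
  | and : Fml → Fml → Fml
  | or : Fml → Fml → Fml
  | imp : Fml → Fml → Fml

/-- Gentzen's natural deduction system NJ for IPL. -/
inductive NJ : Set Fml → Fml → Prop
  | ax {Γ φ} : φ ∈ Γ → NJ Γ φ
  | andI {Γ φ ψ} : NJ Γ φ → NJ Γ ψ → NJ Γ (Fml.and φ ψ)
  | andE1 {Γ φ ψ} : NJ Γ (Fml.and φ ψ) → NJ Γ φ
  | andE2 {Γ φ ψ} : NJ Γ (Fml.and φ ψ) → NJ Γ ψ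
  | orI1 {Γ φ ψ} : NJ Γ φ → NJ Γ (Fml.or φ ψ)
  | orI2 {Γ φ ψ} : NJ Γ ψ → NJ Γ (Fml.or φ ψ)
  | orE {Γ φ ψ χ} : NJ Γ (Fml.or φ ψ) → NJ (insert φ Γ) χ → NJ (insert ψ Γ) χ → NJ Γ χ
  | impI {Γ φ ψ} : NJ (insert φ Γ) ψ → NJ Γ (Fml.imp φ ψ)
  | impE {Γ φ ψ} : NJ Γ (Fml.imp φ ψ) → NJ Γ φ → NJ Γ ψ
  | botE {Γ φ} : NJ Γ Fml.bot → NJ Γ φ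

def Atm.toFml : Atm → Fml
  | Atm.bot => Fml.bot
  | Atm.at_ n => Fml.atom n

mutual
  def Df.toFml : Df → Fml
    | Df.atom a => a.toFml
    | Df.imp g a => Fml.imp g.toFml a.toFml
    | Df.and d₁ d₂ => Fml.and d₁.toFml d₂.toFml
  def Gf.toFml : Gf → Fml
    | Gf.atom a => a.toFml
    | Gf.dimp d g => Fml.imp d.toFml g.toFml
    | Gf.and g₁ g₂ => Fml.and g₁.toFml g₂.toFml
    | Gf.or g₁ g₂ => Fml.or g₁.toFml g₂.toFml
end

/-! ## Base-extension semantics -/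

/-- A (properly second-level) atomic rule: premisses are pairs of a finite set of
dischargeable atoms and an atomic conclusion; the conclusion is an atom. -/
structure ARule where
  prems : List (Finset ℕ × ℕ)
  concl : ℕ

/-- Derivability of an atom from a set of atoms in an atomic system. -/
inductive Deriv (B : Set ARule) : Set ℕ → ℕ → Prop
  | hyp {S p} : p ∈ S → Deriv B S p
  | app {S} {r : ARule} : r ∈ B →
      (∀ pr ∈ r.prems, Deriv B (S ∪ ↑pr.1) pr.2) → Deriv B S r.concl

/-- Sandqvist's support relation `⊩_B φ` (over the basis of all second-level
atomic systems). -/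
def Supp : Set ARule → Fml → Prop
  | B, Fml.atom n => Deriv B ∅ n
  | B, Fml.bot => ∀ n : ℕ, Deriv B ∅ n
  | B, Fml.and φ ψ => Supp B φ ∧ Supp B ψ
  | B, Fml.imp φ ψ => ∀ C, B ⊆ C → Supp C φ → Supp C ψ
  | B, Fml.or φ ψ => ∀ C, B ⊆ C → ∀ p : ℕ,
      (∀ D, C ⊆ D → Supp D φ → Deriv D ∅ p) →
      (∀ D, C ⊆ D → Supp D ψ → Deriv D ∅ p) → Deriv C ∅ p

/-- Support with open assumptions: `Γ ⊩_B φ`. -/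
def SuppCtx (B : Set ARule) (Γ : Set Fml) (φ : Fml) : Prop :=
  ∀ C, B ⊆ C → (∀ ψ ∈ Γ, Supp C ψ) → Supp C φ

/-! ## The bespoke base `N` -/

/-- Atoms occurring in a formula. -/
def atomsIn : Fml → Set ℕ
  | Fml.atom n => {n}
  | Fml.bot => ∅
  | Fml.and φ ψ => atomsIn φ ∪ atomsIn ψ
  | Fml.or φ ψ => atomsIn φ ∪ atomsIn ψ
  | Fml.imp φ ψ => atomsIn φ ∪ atomsIn ψ

/-- A flattening map `♭` is good for a set `S` of formulae if it is injective,
the identity on atoms, and assigns fresh atoms to non-atomic formulae of `S`. -/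
def FlatGood (fl : Fml → ℕ) (S : Set Fml) : Prop :=
  Function.Injective fl ∧ (∀ n, fl (Fml.atom n) = n) ∧
  (∀ φ ∈ S, (∀ n, φ ≠ Fml.atom n) → ∀ ψ ∈ S, fl φ ∉ atomsIn ψ)

/-- `S` is closed under subformulae. -/
def SubClosed (S : Set Fml) : Prop :=
  (∀ φ ψ, Fml.and φ ψ ∈ S → φ ∈ S ∧ ψ ∈ S) ∧
  (∀ φ ψ, Fml.or φ ψ ∈ S → φ ∈ S ∧ ψ ∈ S) ∧
  (∀ φ ψ, Fml.imp φ ψ ∈ S → φ ∈ S ∧ ψ ∈ S)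

/-- The rules of the bespoke base `N` emulating NJ via flattened atoms, for the
formulae occurring in `S`. -/
inductive NRule (fl : Fml → ℕ) (S : Set Fml) : ARule → Prop
  | andI {φ ψ} : Fml.and φ ψ ∈ S →
      NRule fl S ⟨[(∅, fl φ), (∅, fl ψ)], fl (Fml.and φ ψ)⟩
  | andE1 {φ ψ} : Fml.and φ ψ ∈ S →
      NRule fl S ⟨[(∅, fl (Fml.and φ ψ))], fl φ⟩
  | andE2 {φ ψ} : Fml.and φ ψ ∈ S →
      NRule fl S ⟨[(∅, fl (Fml.and φ ψ))], fl ψ⟩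
  | orI1 {φ ψ} : Fml.or φ ψ ∈ S →
      NRule fl S ⟨[(∅, fl φ)], fl (Fml.or φ ψ)⟩
  | orI2 {φ ψ} : Fml.or φ ψ ∈ S →
      NRule fl S ⟨[(∅, fl ψ)], fl (Fml.or φ ψ)⟩
  | orE {φ ψ χ} : Fml.or φ ψ ∈ S → χ ∈ S →
      NRule fl S ⟨[(∅, fl (Fml.or φ ψ)), ({fl φ}, fl χ), ({fl ψ}, fl χ)], fl χ⟩
  | impI {φ ψ} : Fml.imp φ ψ ∈ S →
      NRule fl S ⟨[({fl φ}, fl ψ)], fl (Fml.imp φ ψ)⟩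
  | impE {φ ψ} : Fml.imp φ ψ ∈ S →
      NRule fl S ⟨[(∅, fl φ), (∅, fl (Fml.imp φ ψ))], fl ψ⟩
  | botE {φ} : φ ∈ S →
      NRule fl S ⟨[(∅, fl Fml.bot)], fl φ⟩

/-! ## Encoding atomic systems as formulae / programs -/

def conjAtoms : ℕ → List ℕ → Fml
  | a, [] => Fml.atom a
  | a, b :: l => Fml.and (Fml.atom a) (conjAtoms b l)

noncomputable def encPrem (pr : Finset ℕ × ℕ) : Fml :=
  match pr.1.toList with
  | [] => Fml.atom pr.2
  | a :: l => Fml.imp (conjAtoms a l) (Fml.atom pr.2)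

def conjFrm : Fml → List Fml → Fml
  | f, [] => f
  | f, g :: l => Fml.and f (conjFrm g l)

/-- Encoding `⌊-⌋` of a second-level atomic rule as a formula of IPL. -/
noncomputable def encRule (r : ARule) : Fml :=
  match r.prems with
  | [] => Fml.atom r.concl
  | q :: qs => Fml.imp (conjFrm (encPrem q) (qs.map encPrem)) (Fml.atom r.concl)

def conjD : Df → List Df → Df
  | d, [] => d
  | d, e :: l => Df.and d (conjD e l)

def conjG : Gf → List Gf → Gf
  | g, [] => g
  | g, h :: l => Gf.and g (conjG h l)

noncomputable def encPremG (pr : Finset ℕ × ℕ) : Gf :=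
  match pr.1.toList with
  | [] => Gf.atom (Atm.at_ pr.2)
  | a :: l =>
      Gf.dimp (conjD (Df.atom (Atm.at_ a)) (l.map fun n => Df.atom (Atm.at_ n)))
        (Gf.atom (Atm.at_ pr.2))

/-- Encoding of a second-level atomic rule as a definite formula. -/
noncomputable def encRuleD (r : ARule) : Df :=
  match r.prems with
  | [] => Df.atom (Atm.at_ r.concl)
  | q :: qs => Df.imp (conjG (encPremG q) (qs.map encPremG)) (Atm.at_ r.concl)

theorem sat_mono_interp {I J : Interp} (h : I.le J) :
    ∀ (g : Gf) (P : Program), sat I P g → sat J P g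
  | Gf.atom _, P, hs => h P hs
  | Gf.dimp d g, P, hs => sat_mono_interp h g (insert d P) hs
  | Gf.and g₁ g₂, P, hs => ⟨sat_mono_interp h g₁ P hs.1, sat_mono_interp h g₂ P hs.2⟩
  | Gf.or g₁ g₂, P, hs =>
      hs.elim (fun x => Or.inl (sat_mono_interp h g₁ P x))
        (fun x => Or.inr (sat_mono_interp h g₂ P x))

theorem chain_le (I : ℕ → Interp) (hchain : ∀ n, (I n).le (I (n + 1))) :
    ∀ {n m}, n ≤ m → (I n).le (I m) := by
  intro n m h
  induction h with
  | refl => intro P; exact Set.Subset.refl _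
  | step _ ih => intro P x hx; exact hchain _ P (ih P hx)

theorem sat_chainSup (I : ℕ → Interp) (hchain : ∀ n, (I n).le (I (n + 1))) :
    ∀ (g : Gf) (P : Program), sat (chainSup I) P g ↔ ∃ n, sat (I n) P g
  | Gf.atom a, P => by simp [sat, chainSup]
  | Gf.dimp d g, P => sat_chainSup I hchain g (insert d P)
  | Gf.and g₁ g₂, P => by
    constructor
    · rintro ⟨h₁, h₂⟩
      obtain ⟨n₁, hn₁⟩ := (sat_chainSup I hchain g₁ P).1 h₁
      obtain ⟨n₂, hn₂⟩ := (sat_chainSup I hchain g₂ P).1 h₂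
      exact ⟨max n₁ n₂,
        sat_mono_interp (chain_le I hchain (le_max_left n₁ n₂)) g₁ P hn₁,
        sat_mono_interp (chain_le I hchain (le_max_right n₁ n₂)) g₂ P hn₂⟩
    · rintro ⟨n, h₁, h₂⟩
      exact ⟨(sat_chainSup I hchain g₁ P).2 ⟨n, h₁⟩,
        (sat_chainSup I hchain g₂ P).2 ⟨n, h₂⟩⟩
  | Gf.or g₁ g₂, P => by
    constructor
    · rintro (h | h)
      · obtain ⟨n, hn⟩ := (sat_chainSup I hchain g₁ P).1 h; exact ⟨n, Or.inl hn⟩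
      · obtain ⟨n, hn⟩ := (sat_chainSup I hchain g₂ P).1 h; exact ⟨n, Or.inr hn⟩
    · rintro ⟨n, h | h⟩
      · exact Or.inl ((sat_chainSup I hchain g₁ P).2 ⟨n, h⟩)
      · exact Or.inr ((sat_chainSup I hchain g₂ P).2 ⟨n, h⟩)

/-- `T` is continuous: for any ω-chain of interpretations,
`T` of the pointwise union is the pointwise union of the `T`-images. -/
theorem T_continuous (I : ℕ → Interp) (hchain : ∀ n, (I n).le (I (n + 1))) :
    ∀ P : Program, (T (chainSup I)).val P = ⋃ n, (T (I n)).val P := by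
  intro P
  ext a
  simp only [T, Traw, Set.mem_union, Set.mem_setOf_eq, Set.mem_iUnion]
  constructor
  · rintro ((h | ⟨g, hg, hs⟩) | h)
    · exact ⟨0, Or.inl (Or.inl h)⟩
    · obtain ⟨n, hn⟩ := (sat_chainSup I hchain g P).1 hs
      exact ⟨n, Or.inl (Or.inr ⟨g, hg, hn⟩)⟩
    · obtain ⟨n, hn⟩ := (sat_chainSup I hchain (Gf.atom Atm.bot) P).1 h
      exact ⟨n, Or.inr hn⟩
  · rintro ⟨n, (h | ⟨g, hg, hs⟩) | h⟩
    · exact Or.inl (Or.inl h)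
    · exact Or.inl (Or.inr ⟨g, hg, (sat_chainSup I hchain g P).2 ⟨n, hs⟩⟩)
    · exact Or.inr ((sat_chainSup I hchain (Gf.atom Atm.bot) P).2 ⟨n, h⟩)
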